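/- Let $\rho>0$ be small, $\Omega\subset\{x_n\ge 0\}$, and define $w_\delta(x',x_n) = M_\delta x_n + \phi(x) - \tilde\delta|x'|^2 - \frac{\Lambda^n}{(\lambda\tilde\delta)^{n-1}}x_n^2$ where $\tilde\delta = \delta^3/2$ and $M_\delta = \frac{\Lambda^n}{(\lambda\tilde\delta)^{n-1}}$. If $\Phi$ is a symmetric positive semidefinite matrix field with $\mathrm{trace}(\Phi D^2\phi) = n\det D^2\phi \le n\Lambda$ and $\det\Phi = (\det D^2\phi)^{n-1} \ge \lambda^{n-1}$, then $\Phi^{ij}(w_\delta)_{ij} = n\det D^2\phi - 2\tilde\delta\,\mathrm{trace}(\Phi') - \frac{2\Lambda^n}{(\lambda\tilde\delta)^{n-1}}\Phi^{nn}$, where $\Phi'$ is the upper-left $(n-1)\times(n-1)$ block, and by the arithmetic–geometric mean inequality this is $\le n\Lambda - n\big(2^n\tilde\delta^{n-1}\tfrac{\Lambda^n}{(\lambda\tilde\delta)^{n-1}}\det\Phi\big)^{1/n} \le n\Lambda - 2n\Lambda = -n\Lambda$. -/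

import Mathlib

/-!
Since `Hw` differs from `Hφ` by the diagonal matrix `-diag(2δ̃, …, 2δ̃, 2c)`, the trace
`trace(Φ Hw)` is `n det Hφ` minus a weighted sum of the diagonal entries of `Φ`. Conjugating `Φ`
by the square root of the weight matrix and applying AM–GM to its eigenvalues bounds that sum below
by `n (∏ weights · det Φ)^{1/n}`, and `c` is chosen so that `∏ weights · det Φ ≥ (2Λ)ⁿ`.
-/

open Matrix Finset

namespace Matrix

variable {ι : Type*} [Fintype ι] [DecidableEq ι]

theorem PosSemidef.card_mul_det_rpow_le_trace [Nonempty ι] {A : Matrix ι ι ℝ}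
    (hA : A.PosSemidef) :
    (Fintype.card ι : ℝ) * A.det ^ (Fintype.card ι : ℝ)⁻¹ ≤ A.trace := by
  have hcard : (0 : ℝ) < Fintype.card ι := by exact_mod_cast Fintype.card_pos
  have amgm := Real.geom_mean_le_arith_mean univ 1 hA.1.eigenvalues (fun _ _ => zero_le_one)
    (by simpa using hcard) (fun i _ => hA.eigenvalues_nonneg i)
  simp only [Pi.one_apply, Real.rpow_one, one_mul, sum_const, card_univ, nsmul_eq_mul,
    mul_one] at amgm
  rw [hA.1.det_eq_prod_eigenvalues, hA.1.trace_eq_sum_eigenvalues]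
  simpa [mul_comm, ← le_div_iff₀' hcard] using amgm

theorem PosSemidef.card_mul_rpow_le_sum_mul_diag [Nonempty ι] {A : Matrix ι ι ℝ}
    (hA : A.PosSemidef) {a : ι → ℝ} (ha : ∀ i, 0 ≤ a i) :
    (Fintype.card ι : ℝ) * ((∏ i, a i) * A.det) ^ (Fintype.card ι : ℝ)⁻¹
      ≤ ∑ i, a i * A i i := by
  set D := diagonal fun i => √(a i)
  have hD : Dᴴ = D := by simp [D]
  have hdet : (D * A * Dᴴ).det = (∏ i, a i) * A.det := by
    rw [hD, det_mul, det_mul, det_diagonal, mul_right_comm, ← prod_mul_distrib]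
    simp only [Real.mul_self_sqrt (ha _)]
  have htrace : (D * A * Dᴴ).trace = ∑ i, a i * A i i := by
    simp only [hD, D, trace, diag, diagonal_mul, mul_diagonal]
    exact sum_congr rfl fun i _ => by rw [mul_right_comm, Real.mul_self_sqrt (ha i)]
  simpa only [hdet, htrace] using (hA.mul_mul_conjTranspose_same D).card_mul_det_rpow_le_trace

theorem PosSemidef.card_mul_rpow_le_mul_add_mul_sum_erase {A : Matrix ι ι ℝ}
    (hA : A.PosSemidef) (e : ι) {s t : ℝ} (hs : 0 ≤ s) (ht : 0 ≤ t) :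
    (Fintype.card ι : ℝ) * (t * s ^ (Fintype.card ι - 1) * A.det) ^ (Fintype.card ι : ℝ)⁻¹
      ≤ t * A e e + s * ∑ i ∈ univ.erase e, A i i := by
  have : Nonempty ι := ⟨e⟩
  set a := Function.update (fun _ => s) e t
  have hprod : ∏ i, a i = t * s ^ (Fintype.card ι - 1) := by
    rw [prod_update_of_mem (mem_univ e), prod_const, ← erase_eq, card_erase_of_mem (mem_univ e),
      card_univ]
  have hsum : ∑ i, a i * A i i = t * A e e + s * ∑ i ∈ univ.erase e, A i i := by
    rw [← add_sum_erase _ _ (mem_univ e), mul_sum]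
    congr 1
    · simp [a]
    · exact sum_congr rfl fun i hi => by simp [a, ne_of_mem_erase hi]
  have ha : ∀ i, 0 ≤ a i := fun i => by
    by_cases h : i = e
    · simpa [a, h] using ht
    · simpa [a, h] using hs
  simpa only [hprod, hsum] using hA.card_mul_rpow_le_sum_mul_diag ha

theorem trace_mul_sub_smul_one_sub_single_sub_smul_single {R : Type*} [CommRing R]
    (Φ H : Matrix ι ι R) (e : ι) (s t : R) :
    (Φ * (H - s • (1 - single e e 1) - t • single e e 1)).trace
      = (Φ * H).trace - s * ∑ i ∈ univ.erase e, Φ i i - t * Φ e e := by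
  simp only [Matrix.mul_sub, Matrix.mul_smul, Matrix.mul_one, trace_sub, trace_smul,
    trace_mul_comm Φ (single e e 1), trace_single_mul, smul_eq_mul, one_mul,
    sum_erase_eq_sub (mem_univ e)]
  rfl

end Matrix

theorem two_mul_le_rpow_of_pow_le {n : ℕ} (hn : 0 < n) {lam Lam δt D : ℝ} (hlam : 0 < lam)
    (hLam : lam ≤ Lam) (hδt : 0 < δt) (hD : lam ^ (n - 1) ≤ D) :
    2 * Lam ≤ (2 ^ n * δt ^ (n - 1) * (Lam ^ n / (lam * δt) ^ (n - 1)) * D) ^ (n : ℝ)⁻¹ := by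
  have hLam0 : 0 < Lam := hlam.trans_le hLam
  have hX : 2 ^ n * δt ^ (n - 1) * (Lam ^ n / (lam * δt) ^ (n - 1)) * D
      = (2 * Lam) ^ n * (D / lam ^ (n - 1)) := by
    rw [mul_pow, mul_pow]
    field_simp
  have hratio : 1 ≤ D / lam ^ (n - 1) := by rwa [one_le_div (by positivity)]
  rw [Real.le_rpow_inv_iff_of_pos (by positivity) (by rw [hX]; positivity) (by positivity),
    Real.rpow_natCast, hX]
  exact le_mul_of_one_le_right (by positivity) hratio

theorem stmt13_general (n : ℕ) (lam Lam δ : ℝ)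
    (hlam : 0 < lam) (hδ : 0 < δ)
    (δt c : ℝ) (hδt : δt = δ ^ 3 / 2)
    (hc : c = Lam ^ n / ((lam * δt) ^ (n - 1)))
    (en : Fin n) (Φ Hφ Hw : Matrix (Fin n) (Fin n) ℝ)
    (hΦ : Φ.PosSemidef)
    (htr : (Φ * Hφ).trace = n * Hφ.det)
    (hdetΦ : Φ.det = Hφ.det ^ (n - 1))
    (hg1 : lam ≤ Hφ.det) (hg2 : Hφ.det ≤ Lam)
    (hHw : Hw = Hφ
      - (2 * δt) • ((1 : Matrix (Fin n) (Fin n) ℝ) - Matrix.single en en 1)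
      - (2 * c) • Matrix.single en en 1) :
    (Φ * Hw).trace
        = n * Hφ.det - 2 * δt * (∑ i ∈ Finset.univ.erase en, Φ i i)
            - (2 * Lam ^ n / ((lam * δt) ^ (n - 1))) * Φ en en ∧
    (Φ * Hw).trace
        ≤ n * Lam
            - n * ((2 ^ n * δt ^ (n - 1) * (Lam ^ n / ((lam * δt) ^ (n - 1))) * Φ.det)
                ^ ((1 : ℝ) / n)) ∧
    (Φ * Hw).trace ≤ -(n * Lam) := by
  have hn : 0 < n := en.pos
  have hLam : lam ≤ Lam := hg1.trans hg2
  have hδt0 : 0 < δt := by rw [hδt]; positivity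
  have hc0 : 0 < c := by rw [hc]; have := hlam.trans_le hLam; positivity
  have htrace := trace_mul_sub_smul_one_sub_single_sub_smul_single Φ Hφ en (2 * δt) (2 * c)
  rw [← hHw, htr] at htrace
  have hweights : 2 * c * (2 * δt) ^ (n - 1)
      = 2 ^ n * δt ^ (n - 1) * (Lam ^ n / (lam * δt) ^ (n - 1)) := by
    rw [hc, mul_pow, ← Nat.sub_one_add_one hn.ne', pow_succ]
    simp only [Nat.add_sub_cancel]
    ring
  have hamgm := hΦ.card_mul_rpow_le_mul_add_mul_sum_erase en (by positivity : 0 ≤ 2 * δt)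
    (by positivity : 0 ≤ 2 * c)
  rw [Fintype.card_fin, hweights] at hamgm
  have hroot := two_mul_le_rpow_of_pow_le hn hlam hLam hδt0
    (hdetΦ ▸ pow_le_pow_left₀ hlam.le hg1 _)
  have hdet : (n : ℝ) * Hφ.det ≤ n * Lam := by gcongr
  have hroot' := mul_le_mul_of_nonneg_left hroot (Nat.cast_nonneg (α := ℝ) n)
  rw [one_div]
  exact ⟨by rw [htrace, hc]; ring, by linarith, by linarith⟩

/-- Barrier computation (Lemma 4.4): with `δ̃ = δ³/2`,
`c = Λⁿ/(λδ̃)^{n-1}`, and `Hw = Hφ - 2δ̃(I - eₙeₙᵀ) - 2c·eₙeₙᵀ` the Hessian of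
`w_δ = Mδ xₙ + φ - δ̃|x'|² - c xₙ²`, the linearized operator satisfies
`trace(Φ Hw) = n det Hφ - 2δ̃ trace(Φ') - 2c Φⁿⁿ ≤ nΛ - n(2ⁿδ̃^{n-1} c det Φ)^{1/n} ≤ -nΛ`. -/
theorem stmt13 (n : ℕ) (hn : 2 ≤ n) (lam Lam δ : ℝ)
    (hlam : 0 < lam) (hΛ : lam ≤ Lam) (hδ : 0 < δ)
    (δt c Mδ : ℝ) (hδt : δt = δ ^ 3 / 2)
    (hc : c = Lam ^ n / ((lam * δt) ^ (n - 1))) (hMδ : Mδ = c)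
    (en : Fin n) (Φ Hφ Hw : Matrix (Fin n) (Fin n) ℝ)
    (hΦ : Φ.PosSemidef)
    (htr : (Φ * Hφ).trace = n * Hφ.det)
    (hdetΦ : Φ.det = Hφ.det ^ (n - 1))
    (hg1 : lam ≤ Hφ.det) (hg2 : Hφ.det ≤ Lam)
    (hHw : Hw = Hφ
      - (2 * δt) • ((1 : Matrix (Fin n) (Fin n) ℝ) - Matrix.single en en 1)
      - (2 * c) • Matrix.single en en 1) :
    (Φ * Hw).trace
        = n * Hφ.det - 2 * δt * (∑ i ∈ Finset.univ.erase en, Φ i i)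
            - (2 * Lam ^ n / ((lam * δt) ^ (n - 1))) * Φ en en ∧
    (Φ * Hw).trace
        ≤ n * Lam
            - n * ((2 ^ n * δt ^ (n - 1) * (Lam ^ n / ((lam * δt) ^ (n - 1))) * Φ.det)
                ^ ((1 : ℝ) / n)) ∧
    (Φ * Hw).trace ≤ -(n * Lam) :=
  stmt13_general n lam Lam δ hlam hδ δt c hδt hc en Φ Hφ Hw hΦ htr hdetΦ hg1 hg2 hHw
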